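/- Let p be an odd prime and n ≥ 1. If f is a polynomial with integer coefficients that has constant coefficient 1, is irreducible over the rationals, and divides the independence polynomial of C_{p^n} in ℤ[x], then f is unicyclic; that is, writing k for the coefficient of x in f, the coefficient of x² in f equals C(k,2) − k. -/

import Mathlib

open SimpleGraph Polynomial Finset

/-- The number of independent sets of size `k` in the graph `G`. -/
noncomputable def indepCount {V : Type*} [Fintype V] (G : SimpleGraph V) (k : ℕ) : ℕ :=
  Nat.card {s : Finset V // s.card = k ∧ ∀ u ∈ s, ∀ v ∈ s, ¬ G.Adj u v}

/-- The graph `D_n`: a triangle on the vertices `0, 1, 2` together with the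
pendant path `2 - 3 - ⋯ - (n-1)`. -/
def dGraph (n : ℕ) : SimpleGraph (Fin n) :=
  SimpleGraph.fromRel (fun u v =>
    (u.val = 0 ∧ v.val = 1) ∨ (u.val = 0 ∧ v.val = 2) ∨ (u.val = 1 ∧ v.val = 2) ∨
    (2 ≤ u.val ∧ v.val = u.val + 1))

/-- The independence polynomial of `G`, as a polynomial with integer coefficients. -/
noncomputable def indepPolyZ {V : Type*} [Fintype V] (G : SimpleGraph V) : Polynomial ℤ :=
  ∑ k ∈ Finset.range (Fintype.card V + 1), Polynomial.C ((indepCount G k : ℤ)) * Polynomial.X ^ k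

/-- A polynomial with integer coefficients is *unicyclic* if its constant coefficient is `1`
and there is an integer `k` such that its linear coefficient is `k` and its quadratic
coefficient is `C(k,2) - k`. -/
def Unicyclic (p : Polynomial ℤ) : Prop :=
  p.coeff 0 = 1 ∧ ∃ k : ℤ, p.coeff 1 = k ∧ 2 * p.coeff 2 = k * (k - 1) - 2 * k


/-- number of indep `k`-subsets of the path on `range l`. -/
def pathSets (l k : ℕ) : Finset (Finset ℕ) :=
  (Finset.range l).powerset.filter fun t => t.card = k ∧ ∀ a ∈ t, a + 1 ∉ t

lemma pathSets_zero_right (l : ℕ) : pathSets l 0 = {∅} := by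
  ext t
  simp only [pathSets, Finset.mem_filter, Finset.mem_powerset, Finset.mem_singleton,
    Finset.card_eq_zero]
  constructor
  · rintro ⟨-, h, -⟩; exact h
  · rintro rfl; simp

lemma pathSets_card : ∀ l k, (pathSets l k).card = (l + 1 - k).choose k := by
  intro l
  induction l using Nat.strong_induction_on with
  | _ l ih =>
    intro k
    match l, k with
    | l, 0 => simp [pathSets_zero_right]
    | 0, (k+1) =>
      have : pathSets 0 (k+1) = ∅ := by
        ext t
        simp only [pathSets, Finset.mem_filter, Finset.mem_powerset, Finset.range_zero,
          Finset.subset_empty, Finset.notMem_empty, iff_false, not_and]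
        rintro rfl; simp
      rw [this]
      simp [Nat.choose_eq_zero_of_lt]
    | 1, (k+1) =>
      have h1 : pathSets 1 (k+1) = if k = 0 then {{0}} else ∅ := by
        ext t
        simp only [pathSets, Finset.mem_filter, Finset.mem_powerset, Finset.range_one,
          Finset.subset_singleton_iff]
        constructor
        · rintro ⟨(rfl | rfl), hc, -⟩
          · simp at hc
          · simp at hc
            subst hc; simp
        · split
          · next h => intro h2; simp only [Finset.mem_singleton] at h2; subst h2; subst h; simp
          · simp
      rw [h1]
      rcases k with _ | k <;> simp [Nat.choose_eq_zero_of_lt]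
    | (l+2), (k+1) =>
      classical
      -- split on whether l+1 ∈ t
      have hsplit := Finset.card_filter_add_card_filter_not
        (s := pathSets (l+2) (k+1)) (p := fun t => (l+1) ∈ t)
      have hA : (pathSets (l+2) (k+1)).filter (fun t => ¬ (l+1) ∈ t) = pathSets (l+1) (k+1) := by
        ext t
        simp only [pathSets, Finset.mem_filter, Finset.mem_powerset]
        constructor
        · rintro ⟨⟨hsub, hc, hind⟩, hnot⟩
          refine ⟨?_, hc, hind⟩
          intro a ha
          have := hsub ha
          simp only [Finset.mem_range] at this ⊢
          rcases Nat.lt_or_ge a (l+1) with h | h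
          · exact h
          · exfalso; apply hnot; have : a = l + 1 := by omega
            subst this; exact ha
        · rintro ⟨hsub, hc, hind⟩
          have hnot : (l+1) ∉ t := fun h => by simpa using hsub h
          exact ⟨⟨hsub.trans (by intro a; simp only [Finset.mem_range]; omega), hc, hind⟩, hnot⟩
      have hB : ((pathSets (l+2) (k+1)).filter (fun t => (l+1) ∈ t)).card
          = (pathSets l k).card := by
        apply Finset.card_nbij' (fun t => t.erase (l+1)) (fun t => insert (l+1) t)
        · intro t ht
          simp only [Finset.mem_coe, pathSets, Finset.mem_filter, Finset.mem_powerset] at ht ⊢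
          obtain ⟨⟨hsub, hc, hind⟩, hmem⟩ := ht
          have hlnot : l ∉ t := fun hl => hind l hl hmem
          refine ⟨?_, ?_, ?_⟩
          · intro a ha
            simp only [Finset.mem_erase] at ha
            obtain ⟨hne, hat⟩ := ha
            have := hsub hat
            simp only [Finset.mem_range] at this ⊢
            rcases Nat.lt_or_ge a l with h | h
            · exact h
            · exfalso
              have : a = l ∨ a = l + 1 := by omega
              rcases this with rfl | rfl
              · exact hlnot hat
              · exact hne rfl
          · rw [Finset.card_erase_of_mem hmem, hc]; omega
          · intro a ha
            simp only [Finset.mem_erase] at ha ⊢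
            intro h
            exact hind a ha.2 h.2
        · intro t ht
          simp only [Finset.mem_coe, pathSets, Finset.mem_filter, Finset.mem_powerset] at ht ⊢
          obtain ⟨hsub, hc, hind⟩ := ht
          have hnotmem : (l+1) ∉ t := fun h => by
            have := hsub h; simp only [Finset.mem_range] at this; omega
          refine ⟨⟨?_, ?_, ?_⟩, by simp⟩
          · intro a ha
            simp only [Finset.mem_insert] at ha
            rcases ha with rfl | ha
            · simp only [Finset.mem_range]; omega
            · have := hsub ha; simp only [Finset.mem_range] at this ⊢; omega
          · rw [Finset.card_insert_of_notMem hnotmem, hc]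
          · intro a ha
            simp only [Finset.mem_insert] at ha ⊢
            rintro (h | h)
            · rcases ha with rfl | ha
              · omega
              · have := hsub ha; simp only [Finset.mem_range] at this; omega
            · rcases ha with rfl | ha
              · have := hsub h; simp only [Finset.mem_range] at this; omega
              · exact hind a ha h
        · intro t ht
          simp only [Finset.mem_coe, Finset.mem_filter] at ht
          exact Finset.insert_erase ht.2
        · intro t ht
          simp only [Finset.mem_coe, pathSets, Finset.mem_filter, Finset.mem_powerset] at ht
          apply Finset.erase_insert
          intro h
          have := ht.1 h; simp only [Finset.mem_range] at this; omega
      have e1 := ih (l+1) (by omega) (k+1)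
      have e2 := ih l (by omega) k
      rw [hA, hB, e1, e2] at hsplit
      rw [← hsplit]
      -- choose arithmetic
      rcases Nat.lt_or_ge (l+1) k with h | h
      · rw [Nat.choose_eq_zero_of_lt (by omega), Nat.choose_eq_zero_of_lt (by omega),
          Nat.choose_eq_zero_of_lt (by omega)]
      · have h2 : l + 2 - (k+1) = (l + 1 - k) := by omega
        have h3 : l + 3 - (k+1) = (l + 1 - k) + 1 := by omega
        rw [h2, h3, Nat.choose_succ_succ']

/-- window version: indep `k`-subsets of `[c, c+l)`. -/
lemma window_card (c l k : ℕ) :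
    (((Finset.Ico c (c+l)).powerset.filter fun t => t.card = k ∧ ∀ a ∈ t, a + 1 ∉ t)).card
      = (l + 1 - k).choose k := by
  rw [← pathSets_card l k]
  apply Finset.card_nbij' (fun t => t.image (fun a => a - c)) (fun t => t.image (fun a => a + c))
  · intro t ht
    simp only [Finset.mem_coe, Finset.mem_filter, Finset.mem_powerset, pathSets] at ht ⊢
    obtain ⟨hsub, hc, hind⟩ := ht
    have hmem : ∀ a ∈ t, c ≤ a ∧ a < c + l := by
      intro a ha; have := hsub ha; simpa [Finset.mem_Ico] using this
    refine ⟨?_, ?_, ?_⟩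
    · intro b hb
      simp only [Finset.mem_image] at hb
      obtain ⟨a, ha, rfl⟩ := hb
      have := hmem a ha
      simp only [Finset.mem_range]; omega
    · rw [Finset.card_image_of_injOn, hc]
      intro a ha b hb hab
      replace hab : a - c = b - c := hab
      have h1 := hmem a ha; have h2 := hmem b hb
      omega
    · intro b hb hb1
      simp only [Finset.mem_image] at hb hb1
      obtain ⟨a, ha, rfl⟩ := hb
      obtain ⟨a', ha', he⟩ := hb1
      replace he : a' - c = a - c + 1 := he
      have h1 := hmem a ha; have h2 := hmem a' ha'
      have : a' = a + 1 := by omega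
      subst this
      exact hind a ha ha'
  · intro t ht
    simp only [Finset.mem_coe, Finset.mem_filter, Finset.mem_powerset, pathSets] at ht ⊢
    obtain ⟨hsub, hc, hind⟩ := ht
    have hmem : ∀ a ∈ t, a < l := by
      intro a ha; have := hsub ha; simpa using this
    refine ⟨?_, ?_, ?_⟩
    · intro b hb
      simp only [Finset.mem_image] at hb
      obtain ⟨a, ha, rfl⟩ := hb
      have := hmem a ha
      simp only [Finset.mem_Ico]; omega
    · rw [Finset.card_image_of_injOn, hc]
      intro a _ b _ hab
      replace hab : a + c = b + c := hab
      omega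
    · intro b hb hb1
      simp only [Finset.mem_image] at hb hb1
      obtain ⟨a, ha, rfl⟩ := hb
      obtain ⟨a', ha', he⟩ := hb1
      replace he : a' + c = a + c + 1 := he
      have : a' = a + 1 := by omega
      subst this
      exact hind a ha ha'
  · intro t ht
    simp only [Finset.mem_coe, Finset.mem_filter, Finset.mem_powerset] at ht
    have hmem : ∀ a ∈ t, c ≤ a := by
      intro a ha; have := ht.1 ha; simp only [Finset.mem_Ico] at this; omega
    ext b
    simp only [Finset.mem_image]
    constructor
    · rintro ⟨a, ⟨a', ha', rfl⟩, rfl⟩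
      have := hmem a' ha'
      have : a' - c + c = a' := by omega
      rwa [this]
    · intro hb
      exact ⟨b - c, ⟨b, hb, rfl⟩, by have := hmem b hb; omega⟩
  · intro t ht
    simp only [Finset.mem_coe, pathSets, Finset.mem_filter, Finset.mem_powerset] at ht
    ext b
    simp only [Finset.mem_image]
    constructor
    · rintro ⟨a, ⟨a', ha', rfl⟩, rfl⟩
      simpa using ha'
    · intro hb
      exact ⟨b + c, ⟨b, hb, rfl⟩, by omega⟩

/-- the coefficient sequence of the cycle independence polynomial. -/
def cc (m k : ℕ) : ℕ :=
  match k with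
  | 0 => 1
  | (k+1) => Nat.choose (m - (k+1)) (k+1) + Nat.choose (m - (k+2)) k

lemma indepCount_zero {V : Type*} [Fintype V] (G : SimpleGraph V) : indepCount G 0 = 1 := by
  rw [indepCount, Nat.card_eq_one_iff_unique]
  constructor
  · constructor
    rintro ⟨s, hs, -⟩ ⟨t, ht, -⟩
    simp only [Finset.card_eq_zero] at hs ht
    subst hs; subst ht; rfl
  · exact ⟨⟨∅, by simp⟩⟩

lemma fin_sub_val_one {m : ℕ} (hm : 3 ≤ m) (u v : Fin m) :
    (v - u).val = 1 ↔ (v.val = u.val + 1 ∨ (u.val = m - 1 ∧ v.val = 0)) := by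
  have hA := v.isLt
  have hB := u.isLt
  have hsub : (v - u).val = (m - u.val + v.val) % m := by
    rw [Fin.sub_def]
  have hmod : (m - u.val + v.val) % m = if v.val < u.val then v.val + m - u.val
      else v.val - u.val := by
    split
    · next h =>
      rw [Nat.mod_eq_of_lt (by omega)]
      omega
    · next h =>
      have h2 : m - u.val + v.val = (v.val - u.val) + m := by omega
      rw [h2, Nat.add_mod_right, Nat.mod_eq_of_lt (by omega)]
  rw [hsub, hmod]
  split <;> omega

lemma cycle_adj_iff {m : ℕ} (hm : 3 ≤ m) (u v : Fin m) :
    (cycleGraph m).Adj u v ↔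
      (v.val = u.val + 1 ∨ u.val = v.val + 1 ∨ (u.val = m - 1 ∧ v.val = 0)
        ∨ (v.val = m - 1 ∧ u.val = 0)) := by
  rw [SimpleGraph.cycleGraph_adj', fin_sub_val_one hm, fin_sub_val_one hm]
  tauto

lemma cycle_indepCount {m : ℕ} (hm : 3 ≤ m) (k : ℕ) :
    indepCount (cycleGraph m) k = cc m k := by
  cases k with
  | zero => exact indepCount_zero _
  | succ k =>
    rw [indepCount, Nat.card_eq_fintype_card, Fintype.card_subtype]
    -- pass to finsets of naturals
    have hcard : (Finset.univ.filter (fun s : Finset (Fin m) =>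
          s.card = k + 1 ∧ ∀ u ∈ s, ∀ v ∈ s, ¬ (cycleGraph m).Adj u v)).card
        = ((Finset.range m).powerset.filter (fun t => t.card = k + 1 ∧
            (∀ a ∈ t, a + 1 ∉ t) ∧ ¬(0 ∈ t ∧ m - 1 ∈ t))).card := by
      apply Finset.card_nbij' (fun s => s.image Fin.val)
        (fun t => t.image (fun a => (⟨a % m, Nat.mod_lt a (by omega)⟩ : Fin m)))
      · intro s hs
        simp only [Finset.mem_coe, Finset.mem_filter, Finset.mem_powerset, Finset.mem_univ, true_and] at hs ⊢
        obtain ⟨hc, hind⟩ := hs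
        refine ⟨?_, ?_, ?_, ?_⟩
        · intro a ha
          simp only [Finset.mem_image] at ha
          obtain ⟨u, -, rfl⟩ := ha
          simp only [Finset.mem_range]
          exact u.isLt
        · rw [Finset.card_image_of_injective _ Fin.val_injective, hc]
        · intro a ha ha1
          simp only [Finset.mem_image] at ha ha1
          obtain ⟨u, hu, rfl⟩ := ha
          obtain ⟨v, hv, hv1⟩ := ha1
          exact hind u hu v hv ((cycle_adj_iff hm u v).2 (Or.inl hv1))
        · rintro ⟨h0, hm1⟩
          simp only [Finset.mem_image] at h0 hm1
          obtain ⟨v, hv, hv0⟩ := h0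
          obtain ⟨u, hu, hum⟩ := hm1
          exact hind u hu v hv ((cycle_adj_iff hm u v).2 (Or.inr (Or.inr (Or.inl ⟨hum, hv0⟩))))
      · intro t ht
        simp only [Finset.mem_coe, Finset.mem_filter, Finset.mem_powerset, Finset.mem_univ, true_and] at ht ⊢
        obtain ⟨hsub, hc, hind, hwrap⟩ := ht
        have hlt : ∀ a ∈ t, a < m := by
          intro a ha; have := hsub ha; simpa using this
        have hinj : Set.InjOn (fun a => (⟨a % m, Nat.mod_lt a (by omega)⟩ : Fin m)) t := by
          intro a ha b hb hab
          have h1 := hlt a ha; have h2 := hlt b hb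
          have hab' : a % m = b % m := congrArg Fin.val hab
          rw [Nat.mod_eq_of_lt h1, Nat.mod_eq_of_lt h2] at hab'
          exact hab'
        constructor
        · rw [Finset.card_image_of_injOn hinj, hc]
        · intro u hu v hv hadj
          simp only [Finset.mem_image] at hu hv
          obtain ⟨a, ha, rfl⟩ := hu
          obtain ⟨b, hb, rfl⟩ := hv
          have h1 := hlt a ha; have h2 := hlt b hb
          rw [cycle_adj_iff hm] at hadj
          simp only [Nat.mod_eq_of_lt h1, Nat.mod_eq_of_lt h2] at hadj
          rcases hadj with h | h | ⟨h3, h4⟩ | ⟨h3, h4⟩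
          · exact hind a ha (h ▸ hb)
          · exact hind b hb (h ▸ ha)
          · exact hwrap ⟨h4 ▸ hb, h3 ▸ ha⟩
          · exact hwrap ⟨h4 ▸ ha, h3 ▸ hb⟩
      · intro s hs
        ext u
        simp only [Finset.mem_image]
        constructor
        · rintro ⟨a, ⟨v, hv, rfl⟩, rfl⟩
          simpa [Nat.mod_eq_of_lt v.isLt, Fin.eta] using hv
        · intro hu
          exact ⟨u.val, ⟨u, hu, rfl⟩, by simp [Nat.mod_eq_of_lt u.isLt]⟩
      · intro t ht
        simp only [Finset.mem_coe, Finset.mem_filter, Finset.mem_powerset] at ht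
        have hlt : ∀ a ∈ t, a < m := by
          intro a ha; have := ht.1 ha; simpa using this
        ext a
        simp only [Finset.mem_image]
        constructor
        · rintro ⟨u, ⟨b, hb, rfl⟩, rfl⟩
          simpa [Nat.mod_eq_of_lt (hlt b hb)] using hb
        · intro ha
          exact ⟨⟨a % m, Nat.mod_lt a (by omega)⟩, ⟨a, ha, rfl⟩, by
            simp [Nat.mod_eq_of_lt (hlt a ha)]⟩
    rw [hcard]
    -- split on 0 ∈ t
    set NS := ((Finset.range m).powerset.filter (fun t => t.card = k + 1 ∧
      (∀ a ∈ t, a + 1 ∉ t) ∧ ¬(0 ∈ t ∧ m - 1 ∈ t))) with hNS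
    have hsplit := Finset.card_filter_add_card_filter_not
      (s := NS) (p := fun t => 0 ∈ t)
    have hA : NS.filter (fun t => ¬ 0 ∈ t)
        = ((Finset.Ico 1 (1 + (m-1))).powerset.filter
            (fun t => t.card = k + 1 ∧ ∀ a ∈ t, a + 1 ∉ t)) := by
      ext t
      simp only [hNS, Finset.mem_filter, Finset.mem_powerset]
      constructor
      · rintro ⟨⟨hsub, hc, hind, -⟩, h0⟩
        refine ⟨?_, hc, hind⟩
        intro a ha
        have := hsub ha
        simp only [Finset.mem_range] at this
        simp only [Finset.mem_Ico]
        have : a ≠ 0 := fun h => h0 (h ▸ ha)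
        omega
      · rintro ⟨hsub, hc, hind⟩
        have hmem : ∀ a ∈ t, 1 ≤ a ∧ a < m := by
          intro a ha; have := hsub ha; simp only [Finset.mem_Ico] at this; omega
        have h0 : 0 ∉ t := fun h => by have := hmem 0 h; omega
        refine ⟨⟨?_, hc, hind, fun h => h0 h.1⟩, h0⟩
        intro a ha
        have := hmem a ha
        simp only [Finset.mem_range]; omega
    have hB : (NS.filter (fun t => 0 ∈ t)).card
        = (((Finset.Ico 2 (2 + (m-3))).powerset.filter
            (fun t => t.card = k ∧ ∀ a ∈ t, a + 1 ∉ t))).card := by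
      apply Finset.card_nbij' (fun t => t.erase 0) (fun t => insert 0 t)
      · intro t ht
        simp only [Finset.mem_coe, hNS, Finset.mem_filter, Finset.mem_powerset] at ht ⊢
        obtain ⟨⟨hsub, hc, hind, hwrap⟩, h0⟩ := ht
        have h1 : 1 ∉ t := hind 0 h0
        have hm1 : m - 1 ∉ t := fun h => hwrap ⟨h0, h⟩
        refine ⟨?_, ?_, ?_⟩
        · intro a ha
          simp only [Finset.mem_erase] at ha
          obtain ⟨hne, hat⟩ := ha
          have := hsub hat
          simp only [Finset.mem_range] at this
          simp only [Finset.mem_Ico]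
          have hane : a ≠ 1 := fun h => h1 (h ▸ hat)
          have hanem : a ≠ m - 1 := fun h => hm1 (h ▸ hat)
          omega
        · rw [Finset.card_erase_of_mem h0, hc]; omega
        · intro a ha
          simp only [Finset.mem_erase] at ha ⊢
          rintro ⟨-, h⟩
          exact hind a ha.2 h
      · intro t ht
        simp only [Finset.mem_coe, hNS, Finset.mem_filter, Finset.mem_powerset] at ht ⊢
        obtain ⟨hsub, hc, hind⟩ := ht
        have hmem : ∀ a ∈ t, 2 ≤ a ∧ a < m - 1 := by
          intro a ha; have := hsub ha; simp only [Finset.mem_Ico] at this; omega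
        have h0 : 0 ∉ t := fun h => by have := hmem 0 h; omega
        refine ⟨⟨?_, ?_, ?_, ?_⟩, by simp⟩
        · intro a ha
          simp only [Finset.mem_insert] at ha
          simp only [Finset.mem_range]
          rcases ha with rfl | ha
          · omega
          · have := hmem a ha; omega
        · rw [Finset.card_insert_of_notMem h0, hc]
        · intro a ha
          simp only [Finset.mem_insert] at ha ⊢
          rintro (h | h)
          · rcases ha with rfl | ha
            · omega
            · have := hmem a ha; omega
          · rcases ha with rfl | ha
            · have := hmem 1 h; omega
            · exact hind a ha h
        · rintro ⟨-, h⟩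
          simp only [Finset.mem_insert] at h
          rcases h with h | h
          · omega
          · have := hmem _ h; omega
      · intro t ht
        simp only [Finset.mem_coe, Finset.mem_filter] at ht
        exact Finset.insert_erase ht.2
      · intro t ht
        simp only [Finset.mem_coe, Finset.mem_filter, Finset.mem_powerset] at ht
        apply Finset.erase_insert
        intro h
        have := ht.1 h
        simp only [Finset.mem_Ico] at this
        omega
    rw [hA] at hsplit
    rw [window_card] at hsplit
    rw [hB, window_card] at hsplit
    rw [← hsplit, cc]
    have e1 : m - 1 + 1 - (k+1) = m - (k+1) := by omega
    have e2 : m - 3 + 1 - k = m - (k + 2) := by omega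
    rw [e1, e2]
    omega
/-! ### the coefficient recurrence and the polynomial `cpoly` -/

lemma cc_zero_of_big {m k : ℕ} (hm : 2 ≤ m) (h : m < 2 * k) : cc m k = 0 := by
  match k with
  | 0 => omega
  | 1 => omega
  | (k+2) =>
    show Nat.choose (m - (k+2)) (k+2) + Nat.choose (m - (k+3)) (k+1) = 0
    rw [Nat.choose_eq_zero_of_lt (by omega), Nat.choose_eq_zero_of_lt (by omega)]

lemma cc_rec {m k : ℕ} (hm : 4 ≤ m) (hk : 1 ≤ k) :
    cc m k = cc (m-1) k + cc (m-2) (k-1) := by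
  match k with
  | 1 =>
    show Nat.choose (m-1) 1 + Nat.choose (m-2) 0
      = (Nat.choose (m-1-1) 1 + Nat.choose (m-1-2) 0) + 1
    rw [Nat.choose_one_right, Nat.choose_one_right]
    simp only [Nat.choose_zero_right]
    omega
  | (k+2) =>
    show Nat.choose (m - (k+2)) (k+2) + Nat.choose (m - (k+3)) (k+1)
      = (Nat.choose (m-1 - (k+2)) (k+2) + Nat.choose (m-1 - (k+3)) (k+1))
        + (Nat.choose (m-2 - (k+1)) (k+1) + Nat.choose (m-2 - (k+2)) k)
    have e1 : m - 1 - (k+2) = m - (k+3) := by omega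
    have e2 : m - 2 - (k+1) = m - (k+3) := by omega
    have e3 : m - 1 - (k+3) = m - (k+4) := by omega
    have e4 : m - 2 - (k+2) = m - (k+4) := by omega
    rw [e1, e2, e3, e4]
    rcases Nat.lt_or_ge m (k+3) with h | h
    · have z1 : Nat.choose (m - (k+2)) (k+2) = 0 := Nat.choose_eq_zero_of_lt (by omega)
      have z2 : Nat.choose (m - (k+3)) (k+1) = 0 := Nat.choose_eq_zero_of_lt (by omega)
      have z3 : Nat.choose (m - (k+3)) (k+2) = 0 := Nat.choose_eq_zero_of_lt (by omega)
      have z4 : Nat.choose (m - (k+4)) (k+1) = 0 := Nat.choose_eq_zero_of_lt (by omega)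
      have z5 : Nat.choose (m - (k+4)) k = 0 := Nat.choose_eq_zero_of_lt (by omega)
      rw [z1, z2, z3, z4, z5]
    · rcases Nat.lt_or_ge m (k+4) with h2 | h2
      · have hm3 : m = k + 3 := by omega
        subst hm3
        have e5 : k + 3 - (k+2) = 1 := by omega
        have e6 : k + 3 - (k+3) = 0 := by omega
        have e7 : k + 3 - (k+4) = 0 := by omega
        rw [e5, e6, e7]
        have hk1 : 1 ≤ k := by omega
        have z1 : Nat.choose 1 (k+2) = 0 := Nat.choose_eq_zero_of_lt (by omega)
        have z2 : Nat.choose 0 (k+1) = 0 := Nat.choose_eq_zero_of_lt (by omega)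
        have z3 : Nat.choose 0 (k+2) = 0 := Nat.choose_eq_zero_of_lt (by omega)
        have z4 : Nat.choose 0 k = 0 := Nat.choose_eq_zero_of_lt (by omega)
        rw [z1, z2, z3, z4]
      · have e5 : m - (k+2) = (m - (k+4)) + 2 := by omega
        have e6 : m - (k+3) = (m - (k+4)) + 1 := by omega
        rw [e5, e6]
        rw [Nat.choose_succ_succ' (m - (k+4) + 1) (k+1),
          Nat.choose_succ_succ' (m - (k+4)) k,
          Nat.choose_succ_succ' (m - (k+4)) (k+1)]
        omega

noncomputable def cpoly (m : ℕ) : Polynomial ℤ :=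
  ∑ k ∈ Finset.range (m+1), Polynomial.C ((cc m k : ℤ)) * Polynomial.X ^ k

lemma cpoly_coeff (m j : ℕ) : (cpoly m).coeff j = if j ≤ m then (cc m j : ℤ) else 0 := by
  rw [cpoly, Polynomial.finset_sum_coeff]
  simp only [Polynomial.coeff_C_mul, Polynomial.coeff_X_pow, mul_ite, mul_one, mul_zero]
  rw [Finset.sum_ite_eq (Finset.range (m+1)) j]
  simp [Nat.lt_succ_iff]

lemma cpoly_rec (k : ℕ) :
    cpoly (k+4) = cpoly (k+3) + Polynomial.X * cpoly (k+2) := by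
  ext j
  rw [Polynomial.coeff_add, cpoly_coeff]
  cases j with
  | zero =>
    rw [Polynomial.mul_coeff_zero, Polynomial.coeff_X_zero, zero_mul, add_zero, cpoly_coeff]
    simp [cc]
  | succ j =>
    rw [Polynomial.coeff_X_mul, cpoly_coeff, cpoly_coeff]
    rcases Nat.lt_or_ge (j+1) (k+4) with h | h
    · have h1 : j + 1 ≤ k + 4 := by omega
      have h2 : j + 1 ≤ k + 3 := by omega
      have h3 : j ≤ k + 2 := by omega
      rw [if_pos h1, if_pos h2, if_pos h3]
      have hr := cc_rec (m := k+4) (k := j+1) (by omega) (by omega)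
      have e1 : k + 4 - 1 = k + 3 := rfl
      have e2 : k + 4 - 2 = k + 2 := rfl
      have e3 : j + 1 - 1 = j := rfl
      rw [e1, e2, e3] at hr
      rw [hr]
      push_cast
      ring
    · rcases Nat.lt_or_ge (k+4) (j+1) with h2 | h2
      · rw [if_neg (by omega), if_neg (by omega), if_neg (by omega)]
        ring
      · have hj : j + 1 = k + 4 := by omega
        rw [if_pos (by omega), if_neg (by omega), if_neg (by omega)]
        have : cc (k+4) (j+1) = 0 := by
          rw [hj]
          exact cc_zero_of_big (by omega) (by omega)
        rw [this]
        simp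

lemma cpoly_coeff_zero (m : ℕ) : (cpoly m).coeff 0 = 1 := by
  rw [cpoly_coeff]
  simp [cc]

lemma cpoly_natDegree_le {m : ℕ} (hm : 3 ≤ m) (hmo : Odd m) :
    (cpoly m).natDegree ≤ (m - 1) / 2 := by
  rw [Polynomial.natDegree_le_iff_coeff_eq_zero]
  intro N hN
  rw [cpoly_coeff]
  split
  · next h =>
    have : m < 2 * N := by
      rcases hmo with ⟨r, hr⟩
      omega
    rw [cc_zero_of_big (by omega) this]
    simp
  · rfl

/-! ### the fraction-field identity -/

noncomputable section FracField

abbrev KK : Type := FractionRing (Polynomial ℤ)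

def XX : KK := algebraMap (Polynomial ℤ) KK Polynomial.X

lemma algMap_inj : Function.Injective (algebraMap (Polynomial ℤ) KK) :=
  IsFractionRing.injective _ _

lemma one_add_XX_ne : (1 + XX : KK) ≠ 0 := by
  intro h
  have h2 : algebraMap (Polynomial ℤ) KK (1 + Polynomial.X) = 0 := by
    rw [map_add, map_one]; exact h
  rw [← map_zero (algebraMap (Polynomial ℤ) KK)] at h2
  have := algMap_inj h2
  have h3 := congrArg (fun q => Polynomial.coeff q 0) this
  simp at h3

def ww : KK := -XX / (1 + XX)^2

lemma ww_spec : ww * (1 + XX)^2 = -XX :=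
  div_mul_cancel₀ _ (pow_ne_zero _ one_add_XX_ne)

lemma aeval_cpoly (m : ℕ) :
    Polynomial.aeval ww (cpoly m)
      = ∑ k ∈ Finset.range (m+1), ((cc m k : ℤ) : KK) * ww ^ k := by
  rw [cpoly, map_sum]
  refine Finset.sum_congr rfl fun k _ => ?_
  rw [map_mul, map_pow, Polynomial.aeval_X, Polynomial.aeval_C]
  norm_num

lemma key_identity : ∀ m : ℕ, 2 ≤ m →
    (1 + XX)^m * Polynomial.aeval ww (cpoly m) = XX^m + 1 := by
  intro m
  induction m using Nat.strong_induction_on with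
  | _ m ih =>
    intro hm
    match m, hm with
    | 2, _ =>
      rw [aeval_cpoly]
      rw [Finset.sum_range_succ, Finset.sum_range_succ, Finset.sum_range_one]
      have c0 : cc 2 0 = 1 := rfl
      have c1 : cc 2 1 = 2 := rfl
      have c2 : cc 2 2 = 0 := rfl
      rw [c0, c1, c2]
      push_cast
      linear_combination (2 : KK) * ww_spec
    | 3, _ =>
      rw [aeval_cpoly]
      rw [Finset.sum_range_succ, Finset.sum_range_succ, Finset.sum_range_succ,
        Finset.sum_range_one]
      have c0 : cc 3 0 = 1 := rfl
      have c1 : cc 3 1 = 3 := rfl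
      have c2 : cc 3 2 = 0 := rfl
      have c3 : cc 3 3 = 0 := rfl
      rw [c0, c1, c2, c3]
      push_cast
      linear_combination (3 * (1 + XX) : KK) * ww_spec
    | (k+4), _ =>
      have ih1 := ih (k+3) (by omega) (by omega)
      have ih2 := ih (k+2) (by omega) (by omega)
      rw [cpoly_rec k, map_add, map_mul, Polynomial.aeval_X]
      linear_combination (1 + XX) * ih1 + (ww * (1+XX)^2) * ih2
        + (XX^(k+2) + 1) * ww_spec
/-! ### the palindromic transform -/

noncomputable def TT (D : ℕ) (q : Polynomial ℤ) : Polynomial ℤ :=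
  ∑ j ∈ Finset.range (D+1),
    Polynomial.C (q.coeff j) * (-Polynomial.X)^j * (1 + Polynomial.X)^(2*(D-j))

lemma TT_spec {q : Polynomial ℤ} {D : ℕ} (h : q.natDegree ≤ D) :
    algebraMap (Polynomial ℤ) KK (TT D q) = (1 + XX)^(2*D) * Polynomial.aeval ww q := by
  rw [Polynomial.aeval_eq_sum_range' (n := D + 1) (by omega) ww, TT, map_sum,
    Finset.mul_sum]
  refine Finset.sum_congr rfl fun j hj => ?_
  simp only [Finset.mem_range] at hj
  rw [map_mul, map_mul, map_pow, map_pow, map_neg, map_add, map_one]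
  have hC : algebraMap (Polynomial ℤ) KK (Polynomial.C (q.coeff j))
      = algebraMap ℤ KK (q.coeff j) := by
    rw [IsScalarTower.algebraMap_apply ℤ (Polynomial ℤ) KK]
    rfl
  rw [hC, Algebra.smul_def]
  show algebraMap ℤ KK (q.coeff j) * (-XX)^j * (1 + XX)^(2*(D-j))
    = (1 + XX)^(2*D) * (algebraMap ℤ KK (q.coeff j) * ww^j)
  have hpow : (1 + XX)^(2*D) = ((1+XX)^2)^j * ((1+XX)^2)^(D - j) := by
    rw [← pow_add, ← pow_mul]
    congr 1
    omega
  have hwj : ww^j * ((1+XX)^2)^j = (-XX)^j := by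
    rw [← mul_pow, ww_spec]
  rw [hpow]
  have hrw : (1 + XX)^(2*(D-j)) = ((1+XX)^2)^(D-j) := by rw [← pow_mul]
  rw [hrw]
  calc algebraMap ℤ KK (q.coeff j) * (-XX)^j * ((1+XX)^2)^(D-j)
      = algebraMap ℤ KK (q.coeff j) * (ww^j * ((1+XX)^2)^j) * ((1+XX)^2)^(D-j) := by
        rw [hwj]
    _ = ((1+XX)^2)^j * ((1+XX)^2)^(D-j) * (algebraMap ℤ KK (q.coeff j) * ww^j) := by ring

lemma one_add_X_natDegree : (1 + Polynomial.X : Polynomial ℤ).natDegree = 1 := by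
  have h : (1 + Polynomial.X : Polynomial ℤ) = Polynomial.X + Polynomial.C 1 := by
    rw [Polynomial.C_1, add_comm]
  rw [h, Polynomial.natDegree_X_add_C]

lemma one_add_X_monic : (1 + Polynomial.X : Polynomial ℤ).Monic := by
  have h : (1 + Polynomial.X : Polynomial ℤ) = Polynomial.X + Polynomial.C 1 := by
    rw [Polynomial.C_1, add_comm]
  rw [h]
  exact Polynomial.monic_X_add_C 1

lemma TT_monic {q : Polynomial ℤ} {D : ℕ} (h0 : q.coeff 0 = 1) : (TT D q).Monic := by
  rw [TT, Finset.sum_range_succ']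
  simp only [pow_zero, mul_one, Nat.sub_zero, h0, map_one, one_mul]
  have hmono : ((1 + Polynomial.X : Polynomial ℤ))^(2*D) |>.Monic := one_add_X_monic.pow _
  apply Polynomial.Monic.add_of_right hmono
  have hdeg : ((1 + Polynomial.X : Polynomial ℤ)^(2*D)).degree = ((2*D : ℕ) : WithBot ℕ) := by
    rw [Polynomial.degree_eq_natDegree hmono.ne_zero, Polynomial.natDegree_pow,
      one_add_X_natDegree, mul_one]
  rw [hdeg]
  apply lt_of_le_of_lt (Polynomial.degree_sum_le _ _)
  rw [Finset.sup_lt_iff (by exact WithBot.bot_lt_coe _)]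
  intro j hj
  simp only [Finset.mem_range] at hj
  apply lt_of_le_of_lt (Polynomial.degree_le_natDegree)
  have hnd : (Polynomial.C (q.coeff (j+1)) * (-Polynomial.X)^(j+1)
      * (1 + Polynomial.X)^(2*(D-(j+1)))).natDegree ≤ (j+1) + 2*(D-(j+1)) := by
    apply le_trans (Polynomial.natDegree_mul_le)
    have h1 : (Polynomial.C (q.coeff (j+1)) * (-Polynomial.X)^(j+1)).natDegree ≤ j + 1 := by
      apply le_trans (Polynomial.natDegree_mul_le)
      have h2 : ((-Polynomial.X : Polynomial ℤ)^(j+1)).natDegree ≤ j + 1 := by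
        apply le_trans (Polynomial.natDegree_pow_le)
        rw [Polynomial.natDegree_neg, Polynomial.natDegree_X, mul_one]
      simp [Polynomial.natDegree_C, h2]
    have h3 : ((1 + Polynomial.X : Polynomial ℤ)^(2*(D-(j+1)))).natDegree ≤ 2*(D-(j+1)) := by
      apply le_trans (Polynomial.natDegree_pow_le)
      rw [one_add_X_natDegree, mul_one]
    omega
  have : (j+1) + 2*(D-(j+1)) < 2*D := by omega
  exact_mod_cast lt_of_le_of_lt (Nat.cast_le.mpr hnd) (Nat.cast_lt.mpr this)

lemma TT_coeff_low {q : Polynomial ℤ} {D : ℕ} (h : q.natDegree ≤ D) {i : ℕ} (hi : i ≤ 2) :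
    (TT D q).coeff i
      = ∑ j ∈ Finset.range 3,
          q.coeff j * (-1)^j * (if j ≤ i then ((2*(D-j)).choose (i-j) : ℤ) else 0) := by
  have hterm : ∀ (a : ℤ) (jj E : ℕ), Polynomial.C a * (-Polynomial.X)^jj
      * (1+Polynomial.X)^E = Polynomial.C (a * (-1)^jj)
        * ((1+Polynomial.X)^E * Polynomial.X^jj) := by
    intro a jj E
    rw [neg_pow, map_mul, map_pow]
    have : Polynomial.C (-1 : ℤ) = -1 := by
      rw [map_neg, Polynomial.C_1]
    rw [this]
    ring
  have hcoeff : ∀ (a : ℤ) (jj E : ℕ),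
      (Polynomial.C a * (-Polynomial.X)^jj * (1+Polynomial.X)^E).coeff i
        = a * (-1)^jj * (if jj ≤ i then (E.choose (i - jj) : ℤ) else 0) := by
    intro a jj E
    rw [hterm, Polynomial.coeff_C_mul, Polynomial.coeff_mul_X_pow']
    congr 1
    split
    · rw [Polynomial.coeff_one_add_X_pow]
    · rfl
  rw [TT, Polynomial.finset_sum_coeff]
  have hform : ∀ jj ∈ Finset.range (D+1),
      (Polynomial.C (q.coeff jj) * (-Polynomial.X)^jj
        * (1+Polynomial.X)^(2*(D-jj))).coeff i
      = q.coeff jj * (-1)^jj * (if jj ≤ i then ((2*(D-jj)).choose (i-jj) : ℤ) else 0) :=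
    fun jj _ => hcoeff _ jj _
  rw [Finset.sum_congr rfl hform]
  -- now adjust the index range
  rcases le_total (D+1) 3 with hD | hD
  · apply Finset.sum_subset (Finset.range_subset_range.2 hD)
    intro j _ hj
    simp only [Finset.mem_range, not_lt] at hj
    rw [Polynomial.coeff_eq_zero_of_natDegree_lt (by omega)]
    ring
  · symm
    apply Finset.sum_subset (Finset.range_subset_range.2 hD)
    intro j _ hj
    simp only [Finset.mem_range, not_lt] at hj
    rw [if_neg (by omega)]
    ring

lemma TT_eval_neg_one (q : Polynomial ℤ) (D : ℕ) :
    (TT D q).eval (-1) = q.coeff D := by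
  rw [TT, Polynomial.eval_finset_sum]
  rw [Finset.sum_eq_single D]
  · simp
  · intro j hj hne
    simp only [Finset.mem_range] at hj
    rw [Polynomial.eval_mul, Polynomial.eval_pow]
    have : (1 + Polynomial.X : Polynomial ℤ).eval (-1) = 0 := by simp
    rw [this, zero_pow (by omega), mul_zero]
  · intro h
    simp at h
/-! ### cyclotomic facts over ℚ -/

lemma odd_prime_not_dvd_two {p : ℕ} (hp : p.Prime) (hodd : Odd p) : ¬ p ∣ 2 := by
  intro h
  have : p = 2 := (Nat.prime_dvd_prime_iff_eq hp Nat.prime_two).1 h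
  rw [this] at hodd
  simp [Nat.odd_iff] at hodd

lemma phi_two_p_mul {p : ℕ} (hp : p.Prime) (hodd : Odd p) :
    Polynomial.cyclotomic (2*p) ℚ * (Polynomial.X + 1) = Polynomial.X^p + 1 := by
  have h := Polynomial.cyclotomic_expand_eq_cyclotomic_mul (p := p) (n := 2) hp
    (odd_prime_not_dvd_two hp hodd) ℚ
  rw [Polynomial.cyclotomic_two] at h
  rw [map_add, Polynomial.expand_X, map_one] at h
  exact h.symm

lemma phi2p_coeffs {p : ℕ} (hp : p.Prime) (hodd : Odd p) :
    (Polynomial.cyclotomic (2*p) ℚ).coeff 0 = 1 ∧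
    (Polynomial.cyclotomic (2*p) ℚ).coeff 1 = -1 ∧
    (Polynomial.cyclotomic (2*p) ℚ).coeff 2 = 1 := by
  have hp3 : 3 ≤ p := by
    have := hp.two_le
    rcases Nat.eq_or_lt_of_le this with h | h
    · exfalso; rw [← h] at hodd; simp [Nat.odd_iff] at hodd
    · omega
  have key : Polynomial.cyclotomic (2*p) ℚ * Polynomial.X + Polynomial.cyclotomic (2*p) ℚ
      = Polynomial.X^p + 1 := by
    rw [← phi_two_p_mul hp hodd]; ring
  set Q := Polynomial.cyclotomic (2*p) ℚ
  have hxp0 : (Polynomial.X^p : Polynomial ℚ).coeff 0 = 0 := by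
    rw [Polynomial.coeff_X_pow, if_neg (by omega)]
  have hxp1 : (Polynomial.X^p : Polynomial ℚ).coeff 1 = 0 := by
    rw [Polynomial.coeff_X_pow, if_neg (by omega)]
  have hxp2 : (Polynomial.X^p : Polynomial ℚ).coeff (1+1) = 0 := by
    rw [Polynomial.coeff_X_pow, if_neg (by omega)]
  have h10 : (1 : Polynomial ℚ).coeff 0 = 1 := by simp
  have h11 : (1 : Polynomial ℚ).coeff 1 = 0 := by simp [Polynomial.coeff_one]
  have h12 : (1 : Polynomial ℚ).coeff (1+1) = 0 := by simp [Polynomial.coeff_one]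
  have e0 := congrArg (fun q => Polynomial.coeff q 0) key
  have e1 := congrArg (fun q => Polynomial.coeff q (0+1)) key
  have e2 := congrArg (fun q => Polynomial.coeff q (1+1)) key
  simp only [Polynomial.coeff_add, Polynomial.mul_coeff_zero, Polynomial.coeff_X_zero,
    mul_zero, zero_add, Polynomial.coeff_mul_X] at e0 e1 e2
  rw [hxp0, h10] at e0
  rw [hxp1, h11] at e1
  rw [hxp2, h12] at e2
  refine ⟨by linarith, by linarith, by linarith⟩

lemma phi_high_coeff0 {p : ℕ} (hp : p.Prime) (hodd : Odd p) :
    ∀ b, 1 ≤ b → (Polynomial.cyclotomic (2*p^b) ℚ).coeff 0 = 1 := by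
  intro b
  induction b with
  | zero => omega
  | succ b ih =>
    intro _
    rcases Nat.eq_zero_or_pos b with rfl | hb
    · simpa [pow_one] using (phi2p_coeffs hp hodd).1
    · have hdvd : p ∣ 2 * p ^ b := Dvd.dvd.mul_left (dvd_pow_self p (by omega)) 2
      have hexp := Polynomial.cyclotomic_expand_eq_cyclotomic hp hdvd ℚ
      have he : 2 * p ^ b * p = 2 * p ^ (b+1) := by ring
      rw [he] at hexp
      rw [← hexp, Polynomial.coeff_expand hp.pos, if_pos (dvd_zero p), Nat.zero_div]
      exact ih hb

lemma phi_high_coeffs {p : ℕ} (hp : p.Prime) (hodd : Odd p) :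
    ∀ b, 2 ≤ b → (Polynomial.cyclotomic (2*p^b) ℚ).coeff 0 = 1 ∧
      (Polynomial.cyclotomic (2*p^b) ℚ).coeff 1 = 0 ∧
      (Polynomial.cyclotomic (2*p^b) ℚ).coeff 2 = 0 := by
  intro b hb
  have hp3 : 3 ≤ p := by
    have := hp.two_le
    rcases Nat.eq_or_lt_of_le this with h | h
    · exfalso; rw [← h] at hodd; simp [Nat.odd_iff] at hodd
    · omega
  obtain ⟨b', rfl⟩ : ∃ b', b = b' + 2 := ⟨b - 2, by omega⟩
  have hdvd : p ∣ 2 * p ^ (b'+1) := Dvd.dvd.mul_left (dvd_pow_self p (by omega)) 2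
  have hexp := Polynomial.cyclotomic_expand_eq_cyclotomic hp hdvd ℚ
  have he : 2 * p ^ (b'+1) * p = 2 * p ^ (b'+2) := by ring
  rw [he] at hexp
  refine ⟨phi_high_coeff0 hp hodd _ (by omega), ?_, ?_⟩
  · rw [← hexp, Polynomial.coeff_expand hp.pos, if_neg (by
      intro h
      have := Nat.le_of_dvd (by omega) h
      omega)]
  · rw [← hexp, Polynomial.coeff_expand hp.pos, if_neg (by
      intro h
      have := Nat.le_of_dvd (by omega) h
      omega)]

lemma xpow_add_one_eq_prod {p : ℕ} (hp : p.Prime) (hodd : Odd p) :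
    ∀ n : ℕ, (Polynomial.X : Polynomial ℚ)^(p^n) + 1
      = ∏ b ∈ Finset.range (n+1), Polynomial.cyclotomic (2*p^b) ℚ := by
  intro n
  induction n with
  | zero =>
    simp [Polynomial.cyclotomic_two]
  | succ n ih =>
    have hexpand := congrArg (Polynomial.expand ℚ p) ih
    rw [map_add, map_pow, Polynomial.expand_X, map_one, ← pow_mul] at hexpand
    have he : p * p ^ n = p ^ (n+1) := by ring
    rw [he] at hexpand
    rw [hexpand, map_prod]
    have h0 : Polynomial.expand ℚ p (Polynomial.cyclotomic (2*p^0) ℚ)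
        = Polynomial.cyclotomic (2*p^1) ℚ * Polynomial.cyclotomic (2*p^0) ℚ := by
      simp only [pow_zero, mul_one, pow_one]
      exact Polynomial.cyclotomic_expand_eq_cyclotomic_mul hp (odd_prime_not_dvd_two hp hodd) ℚ
    have hstep : ∀ b : ℕ, Polynomial.expand ℚ p (Polynomial.cyclotomic (2*p^(b+1)) ℚ)
        = Polynomial.cyclotomic (2*p^(b+2)) ℚ := by
      intro b
      have hdvd : p ∣ 2 * p ^ (b+1) := Dvd.dvd.mul_left (dvd_pow_self p (by omega)) 2
      have h := Polynomial.cyclotomic_expand_eq_cyclotomic hp hdvd ℚ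
      have he2 : 2 * p ^ (b+1) * p = 2 * p ^ (b+2) := by ring
      rw [he2] at h
      exact h
    have hL : (∏ b ∈ Finset.range (n+1), Polynomial.expand ℚ p (Polynomial.cyclotomic (2*p^b) ℚ))
        = (∏ b ∈ Finset.range n, Polynomial.cyclotomic (2*p^(b+1+1)) ℚ)
          * (Polynomial.cyclotomic (2*p^1) ℚ * Polynomial.cyclotomic (2*p^0) ℚ) := by
      rw [Finset.prod_range_succ']
      rw [Finset.prod_congr rfl (fun b _ => hstep b), h0]
    have hR : (∏ b ∈ Finset.range (n+1+1), Polynomial.cyclotomic (2*p^b) ℚ)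
        = (∏ b ∈ Finset.range n, Polynomial.cyclotomic (2*p^(b+1+1)) ℚ)
          * Polynomial.cyclotomic (2*p^(0+1)) ℚ * Polynomial.cyclotomic (2*p^0) ℚ := by
      rw [Finset.prod_range_succ', Finset.prod_range_succ']
    rw [hL, hR]
    ring

/-! ### monic factors of products of monic irreducibles -/

lemma monic_factor_of_prod :
    ∀ (t : Finset ℕ) (P : ℕ → Polynomial ℚ)
      (_ : ∀ b ∈ t, (P b).Monic ∧ Irreducible (P b)) (F W : Polynomial ℚ)
      (_ : F.Monic) (_ : F * W = ∏ b ∈ t, P b),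
      ∃ S ⊆ t, F = ∏ b ∈ S, P b := by
  intro t
  induction t using Finset.induction_on with
  | empty =>
    intro P _ F W hF h
    rw [Finset.prod_empty] at h
    refine ⟨∅, Finset.Subset.refl _, ?_⟩
    rw [Finset.prod_empty]
    exact hF.eq_one_of_isUnit (IsUnit.of_mul_eq_one _ h)
  | insert a s ha ih =>
    intro P hP F W hF h
    rw [Finset.prod_insert ha] at h
    have hPa := hP a (Finset.mem_insert_self a s)
    have hprime : Prime (P a) := hPa.2.prime
    have hdvd : P a ∣ F * W := ⟨∏ b ∈ s, P b, h⟩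
    rcases hprime.2.2 F W hdvd with hdF | hdW
    · obtain ⟨F₁, rfl⟩ := hdF
      have hF₁ : F₁.Monic := hPa.1.of_mul_monic_left hF
      have hcancel : F₁ * W = ∏ b ∈ s, P b := by
        have := h
        rw [mul_assoc] at this
        exact mul_left_cancel₀ hPa.1.ne_zero this
      obtain ⟨S, hS, rfl⟩ := ih P (fun b hb => hP b (Finset.mem_insert_of_mem hb)) F₁ W hF₁ hcancel
      refine ⟨insert a S, Finset.insert_subset_insert a hS, ?_⟩
      rw [Finset.prod_insert (fun hc => ha (hS hc))]
    · obtain ⟨W₁, rfl⟩ := hdW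
      have hcancel : F * W₁ = ∏ b ∈ s, P b := by
        have h2 : P a * (F * W₁) = P a * ∏ b ∈ s, P b := by
          rw [← h]; ring
        exact mul_left_cancel₀ hPa.1.ne_zero h2
      obtain ⟨S, hS, rfl⟩ := ih P (fun b hb => hP b (Finset.mem_insert_of_mem hb)) F W₁ hF hcancel
      exact ⟨S, hS.trans (Finset.subset_insert a s), rfl⟩

/-! ### low coefficients of products -/

lemma qcoeff_mul_one (a b : Polynomial ℚ) :
    (a*b).coeff 1 = a.coeff 0 * b.coeff 1 + a.coeff 1 * b.coeff 0 := by
  rw [Polynomial.coeff_mul, Finset.Nat.sum_antidiagonal_eq_sum_range_succ_mk]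
  rw [Finset.sum_range_succ, Finset.sum_range_one]

lemma qcoeff_mul_two (a b : Polynomial ℚ) :
    (a*b).coeff 2 = a.coeff 0 * b.coeff 2 + a.coeff 1 * b.coeff 1 + a.coeff 2 * b.coeff 0 := by
  rw [Polynomial.coeff_mul, Finset.Nat.sum_antidiagonal_eq_sum_range_succ_mk]
  rw [Finset.sum_range_succ, Finset.sum_range_succ, Finset.sum_range_one]

lemma prod_coeff_triple {S : Finset ℕ} {P : ℕ → Polynomial ℚ}
    (h : ∀ b ∈ S, (P b).coeff 0 = 1 ∧ (P b).coeff 1 = 0 ∧ (P b).coeff 2 = 0) :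
    (∏ b ∈ S, P b).coeff 0 = 1 ∧ (∏ b ∈ S, P b).coeff 1 = 0
      ∧ (∏ b ∈ S, P b).coeff 2 = 0 := by
  refine Finset.prod_induction P
    (fun q => q.coeff 0 = 1 ∧ q.coeff 1 = 0 ∧ q.coeff 2 = 0) ?_ ?_ h
  · rintro x y ⟨hx0, hx1, hx2⟩ ⟨hy0, hy1, hy2⟩
    refine ⟨?_, ?_, ?_⟩
    · rw [Polynomial.mul_coeff_zero, hx0, hy0, one_mul]
    · rw [qcoeff_mul_one, hx0, hx1, hy1]; ring
    · rw [qcoeff_mul_two, hx0, hx1, hx2, hy1, hy2]; ring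
  · refine ⟨?_, ?_, ?_⟩ <;> simp [Polynomial.coeff_one]
theorem factor_of_primePowerCycle_unicyclic (p n : ℕ) (hp : p.Prime) (hodd : Odd p)
    (hn : 1 ≤ n) (f : Polynomial ℤ) (hf0 : f.coeff 0 = 1)
    (hirr : Irreducible (f.map (Int.castRingHom ℚ)))
    (hdvd : f ∣ indepPolyZ (SimpleGraph.cycleGraph (p ^ n))) :
    Unicyclic f := by
  classical
  have hp3 : 3 ≤ p := by
    have h2 := hp.two_le
    rcases Nat.eq_or_lt_of_le h2 with h | h
    · exfalso; rw [← h] at hodd; simp [Nat.odd_iff] at hodd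
    · omega
  set m := p ^ n with hm
  have hm3 : 3 ≤ m := by
    calc 3 ≤ p := hp3
    _ ≤ p ^ n := Nat.le_self_pow (by omega) p
  have hmodd : Odd m := hodd.pow
  have hpoly : indepPolyZ (SimpleGraph.cycleGraph m) = cpoly m := by
    rw [indepPolyZ, cpoly]
    simp only [Fintype.card_fin]
    exact Finset.sum_congr rfl fun k _ => by rw [cycle_indepCount hm3 k]
  rw [hpoly] at hdvd
  obtain ⟨g, hg⟩ := hdvd
  have hf_ne : f ≠ 0 := fun h => by rw [h] at hf0; simp at hf0
  have hg0 : g.coeff 0 = 1 := by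
    have h := congrArg (fun q => Polynomial.coeff q 0) hg
    simp only [Polynomial.mul_coeff_zero, cpoly_coeff_zero, hf0, one_mul] at h
    exact h.symm
  have hg_ne : g ≠ 0 := fun h => by rw [h] at hg0; simp at hg0
  have hd1 : 1 ≤ f.natDegree := by
    by_contra hcon
    have hd0 : f.natDegree = 0 := by omega
    have hfC : f = Polynomial.C (f.coeff 0) := Polynomial.eq_C_of_natDegree_eq_zero hd0
    rw [hf0, Polynomial.C_1] at hfC
    rw [hfC, Polynomial.map_one] at hirr
    exact not_irreducible_one hirr
  have hde : f.natDegree + g.natDegree = (cpoly m).natDegree := by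
    rw [hg, Polynomial.natDegree_mul hf_ne hg_ne]
  have hdeg2 : 2*(f.natDegree + g.natDegree) < m := by
    have h1 := cpoly_natDegree_le hm3 hmodd
    rcases hmodd with ⟨r, hr⟩
    omega
  set d := f.natDegree with hd
  set e := g.natDegree with he
  set t := m - 2*(d+e) with ht
  have ht1 : 1 ≤ t := by omega
  have hm2 : 2 ≤ m := by omega
  -- the integral identity
  have hZ : TT d f * TT e g * (1+Polynomial.X)^t = Polynomial.X^m + 1 := by
    apply algMap_inj
    have hXXdef : algebraMap (Polynomial ℤ) KK Polynomial.X = XX := rfl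
    rw [map_mul, map_mul, map_pow, map_add, map_one, hXXdef]
    rw [TT_spec hd.ge, TT_spec he.ge]
    rw [map_add, map_pow, map_one, hXXdef]
    calc (1 + XX)^(2*d) * Polynomial.aeval ww f
          * ((1 + XX)^(2*e) * Polynomial.aeval ww g) * (1+XX)^t
        = (1+XX)^(2*d) * (1+XX)^(2*e) * (1+XX)^t
            * (Polynomial.aeval ww f * Polynomial.aeval ww g) := by ring
      _ = (1+XX)^m * Polynomial.aeval ww (cpoly m) := by
          rw [← pow_add, ← pow_add, ← map_mul, ← hg]
          have hexp : 2*d + 2*e + t = m := by omega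
          rw [hexp]
      _ = XX^m + 1 := key_identity m hm2
  -- t must equal 1 (squarefreeness at -1)
  have ht2 : t = 1 := by
    by_contra hcon
    have h2t : 2 ≤ t := by omega
    have hh : Polynomial.X^m + 1
        = (1+Polynomial.X)^2 * (TT d f * TT e g * (1+Polynomial.X)^(t-2)) := by
      rw [← hZ]
      have hsp : (1+Polynomial.X : Polynomial ℤ)^t
          = (1+Polynomial.X)^(t-2) * (1+Polynomial.X)^2 := by
        rw [← pow_add]
        congr 1
        omega
      rw [hsp]
      ring
    have hLval : Polynomial.eval (-1:ℤ) (Polynomial.derivative (Polynomial.X^m + 1))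
        = (m : ℤ) := by
      rw [Polynomial.derivative_add, Polynomial.derivative_one, Polynomial.derivative_X_pow,
        add_zero, Polynomial.eval_mul, Polynomial.eval_C, Polynomial.eval_pow,
        Polynomial.eval_X]
      have heven : Even (m - 1) := Nat.Odd.sub_odd hmodd odd_one
      rw [heven.neg_one_pow, mul_one]
    have hRval : Polynomial.eval (-1:ℤ) (Polynomial.derivative
        ((1+Polynomial.X)^2 * (TT d f * TT e g * (1+Polynomial.X)^(t-2)))) = 0 := by
      rw [Polynomial.derivative_mul, Polynomial.derivative_pow]
      simp
    have hmz : (m : ℤ) = 0 := by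
      rw [← hLval, hh]
      exact hRval
    have : m = 0 := by exact_mod_cast hmz
    omega
  rw [ht2, pow_one] at hZ
  -- pass to ℚ and factor into cyclotomics
  have hQ : (TT d f).map (Int.castRingHom ℚ)
      * ((TT e g).map (Int.castRingHom ℚ) * (1+Polynomial.X))
      = ∏ b ∈ Finset.range (n+1), Polynomial.cyclotomic (2*p^b) ℚ := by
    have hmap := congrArg (Polynomial.map (Int.castRingHom ℚ)) hZ
    simp only [Polynomial.map_mul, Polynomial.map_pow, Polynomial.map_add,
      Polynomial.map_one, Polynomial.map_X] at hmap
    rw [← xpow_add_one_eq_prod hp hodd n, ← hm, ← hmap]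
    ring
  obtain ⟨S, hSsub, hSF⟩ := monic_factor_of_prod (Finset.range (n+1))
    (fun b => Polynomial.cyclotomic (2*p^b) ℚ)
    (fun b _ => ⟨Polynomial.cyclotomic.monic _ _,
      Polynomial.cyclotomic.irreducible_rat (Nat.mul_pos (by omega) (pow_pos hp.pos b))⟩)
    ((TT d f).map (Int.castRingHom ℚ))
    ((TT e g).map (Int.castRingHom ℚ) * (1+Polynomial.X))
    ((TT_monic hf0).map (Int.castRingHom ℚ)) hQ
  -- the factor X+1 does not occur in F
  have hFev : ((TT d f).map (Int.castRingHom ℚ)).eval (-1) = ((f.coeff d : ℤ) : ℚ) := by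
    have h1 : ((-1 : ℚ)) = (Int.castRingHom ℚ) (-1) := by simp
    rw [Polynomial.eval_map, h1, Polynomial.eval₂_at_apply, TT_eval_neg_one]
    exact eq_intCast _ _
  have h0S : 0 ∉ S := by
    intro h0
    have hdvd2 : Polynomial.cyclotomic (2*p^0) ℚ ∣ (TT d f).map (Int.castRingHom ℚ) := by
      rw [hSF]; exact Finset.dvd_prod_of_mem _ h0
    rw [pow_zero, mul_one, Polynomial.cyclotomic_two] at hdvd2
    obtain ⟨w, hw⟩ := hdvd2
    have hev := congrArg (Polynomial.eval (-1 : ℚ)) hw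
    rw [hFev] at hev
    simp only [Polynomial.eval_mul, Polynomial.eval_add, Polynomial.eval_X,
      Polynomial.eval_one] at hev
    norm_num at hev
    have hcd : f.coeff d = 0 := by exact_mod_cast hev
    have hlc : f.coeff d ≠ 0 := by
      rw [hd]
      show f.leadingCoeff ≠ 0
      exact Polynomial.leadingCoeff_ne_zero.mpr hf_ne
    exact hlc hcd
  -- low coefficients of F over ℚ
  have hge2 : ∀ b ∈ S.erase 1, (Polynomial.cyclotomic (2*p^b) ℚ).coeff 0 = 1
      ∧ (Polynomial.cyclotomic (2*p^b) ℚ).coeff 1 = 0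
      ∧ (Polynomial.cyclotomic (2*p^b) ℚ).coeff 2 = 0 := by
    intro b hb
    rcases Finset.mem_erase.1 hb with ⟨hb1, hbS⟩
    have hb0 : b ≠ 0 := fun h => h0S (h ▸ hbS)
    exact phi_high_coeffs hp hodd b (by omega)
  have hkey : ((TT d f).coeff 1 = 0 ∧ (TT d f).coeff 2 = 0)
      ∨ ((TT d f).coeff 1 = -1 ∧ (TT d f).coeff 2 = 1) := by
    by_cases h1S : 1 ∈ S
    · right
      have hSplit : (∏ b ∈ S, Polynomial.cyclotomic (2*p^b) ℚ)
          = Polynomial.cyclotomic (2*p^1) ℚ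
            * ∏ b ∈ S.erase 1, Polynomial.cyclotomic (2*p^b) ℚ :=
        (Finset.mul_prod_erase S _ h1S).symm
      have hps : (2:ℕ)*p^1 = 2*p := by ring
      rw [hps] at hSplit
      obtain ⟨hT0, hT1, hT2⟩ := prod_coeff_triple hge2
      obtain ⟨c0, c1, c2⟩ := phi2p_coeffs hp hodd
      have hc1 : ((TT d f).map (Int.castRingHom ℚ)).coeff 1 = -1 := by
        rw [hSF, hSplit, qcoeff_mul_one, c0, c1, hT0, hT1]; ring
      have hc2 : ((TT d f).map (Int.castRingHom ℚ)).coeff 2 = 1 := by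
        rw [hSF, hSplit, qcoeff_mul_two, c0, c1, c2, hT0, hT1, hT2]; ring
      rw [Polynomial.coeff_map, eq_intCast] at hc1 hc2
      constructor
      · exact_mod_cast hc1
      · exact_mod_cast hc2
    · left
      have hall : ∀ b ∈ S, (Polynomial.cyclotomic (2*p^b) ℚ).coeff 0 = 1
          ∧ (Polynomial.cyclotomic (2*p^b) ℚ).coeff 1 = 0
          ∧ (Polynomial.cyclotomic (2*p^b) ℚ).coeff 2 = 0 := by
        intro b hb
        have hb0 : b ≠ 0 := fun h => h0S (h ▸ hb)
        have hb1 : b ≠ 1 := fun h => h1S (h ▸ hb)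
        exact phi_high_coeffs hp hodd b (by omega)
      obtain ⟨hT0, hT1, hT2⟩ := prod_coeff_triple hall
      have hc1 : ((TT d f).map (Int.castRingHom ℚ)).coeff 1 = 0 := by rw [hSF, hT1]
      have hc2 : ((TT d f).map (Int.castRingHom ℚ)).coeff 2 = 0 := by rw [hSF, hT2]
      rw [Polynomial.coeff_map, eq_intCast] at hc1 hc2
      constructor
      · exact_mod_cast hc1
      · exact_mod_cast hc2
  -- extract the coefficients of f
  have hF1 := TT_coeff_low (q := f) (D := d) hd.ge (i := 1) (by omega)
  have hF2 := TT_coeff_low (q := f) (D := d) hd.ge (i := 2) (by omega)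
  rw [Finset.sum_range_succ, Finset.sum_range_succ, Finset.sum_range_one] at hF1 hF2
  norm_num [hf0] at hF1 hF2
  obtain ⟨d', hd'⟩ : ∃ d', d = d' + 1 := ⟨d-1, by omega⟩
  have hchn : (2*d).choose 2 = (d'+1)*(2*d'+1) := by
    rw [hd']
    rw [Nat.choose_two_right]
    have h1 : 2*(d'+1) - 1 = 2*d'+1 := by omega
    rw [h1]
    have h2 : 2*(d'+1) * (2*d'+1) = 2*((d'+1)*(2*d'+1)) := by ring
    rw [h2, Nat.mul_div_cancel_left _ (by omega : 0 < 2)]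
  have hdm1 : d - 1 = d' := by omega
  refine ⟨hf0, f.coeff 1, rfl, ?_⟩
  rcases hkey with ⟨hk1, hk2⟩ | ⟨hk1, hk2⟩
  · rw [hk1] at hF1
    rw [hk2] at hF2
    rw [hdm1, hchn] at hF2
    rw [hd'] at hF1
    have hf1 : f.coeff 1 = 2*(d'+1 : ℤ) := by push_cast at hF1; linarith
    rw [hf1] at hF2 ⊢
    push_cast at hF2 ⊢
    linear_combination (-2 : ℤ) * hF2
  · rw [hk1] at hF1
    rw [hk2] at hF2
    rw [hdm1, hchn] at hF2
    rw [hd'] at hF1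
    have hf1 : f.coeff 1 = 2*(d' : ℤ) + 3 := by push_cast at hF1; linarith
    rw [hf1] at hF2 ⊢
    push_cast at hF2 ⊢
    linear_combination (-2 : ℤ) * hF2

end FracField
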